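/- arXiv:2106.14939 — 2 statements merged into one kernel-verified Lean document; each statement's English description precedes it below -/
import Mathlib

section
/- Let (y_n)_{n≥0} be a sequence of positive real numbers satisfying y_{n+1} ≤ c·b^n·y_n^{1+α} for all n ≥ 0, where b > 1 and c, α > 0. If y_0 ≤ c^{−1/α}·b^{−1/α²}, then y_n → 0 as n → ∞. -/
/-!
With `q = b ^ (-1/α) < 1`, so that `b * q ^ α = 1`, the smallness of `y 0` says exactly
`c * (y 0) ^ α ≤ q`, and induction then gives the geometric decay `y n ≤ y 0 * q ^ n`.
-/

open Real

namespace FastGeometricConvergence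

variable {y : ℕ → ℝ} {b c α : ℝ}

lemma mul_rpow_rpow_neg_inv (hb : 0 < b) (hα : α ≠ 0) : b * (b ^ (-(1 / α))) ^ α = 1 := by
  rw [← rpow_mul hb.le, show -(1 / α) * α = -1 by field_simp, rpow_neg_one,
    mul_inv_cancel₀ hb.ne']

lemma mul_rpow_le_rpow_neg_inv (hb : 0 < b) (hc : 0 < c) (hα : 0 < α) {y₀ : ℝ} (hy₀ : 0 ≤ y₀)
    (h : y₀ ≤ c ^ (-(1 / α)) * b ^ (-(1 / α ^ 2))) : c * y₀ ^ α ≤ b ^ (-(1 / α)) := by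
  have hpow : (c ^ (-(1 / α)) * b ^ (-(1 / α ^ 2))) ^ α = c⁻¹ * b ^ (-(1 / α)) := by
    rw [mul_rpow (by positivity) (by positivity), ← rpow_mul hc.le, ← rpow_mul hb.le,
      show -(1 / α) * α = -1 by field_simp, show -(1 / α ^ 2) * α = -(1 / α) by field_simp,
      rpow_neg_one]
  calc c * y₀ ^ α ≤ c * (c⁻¹ * b ^ (-(1 / α))) := by
        gcongr
        exact hpow ▸ rpow_le_rpow hy₀ h hα.le
    _ = b ^ (-(1 / α)) := by field_simp

lemma le_mul_rpow_neg_inv_pow (hb : 0 < b) (hc : 0 ≤ c) (hα : 0 < α) (hy : ∀ n, 0 ≤ y n)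
    (hrec : ∀ n : ℕ, y (n + 1) ≤ c * b ^ (n : ℝ) * y n ^ (1 + α))
    (h0 : c * y 0 ^ α ≤ b ^ (-(1 / α))) (n : ℕ) : y n ≤ y 0 * (b ^ (-(1 / α))) ^ n := by
  set q := b ^ (-(1 / α))
  have hq : 0 ≤ q := by positivity
  induction n with
  | zero => simp
  | succ n ih =>
    have hyq : 0 ≤ y 0 * q ^ n := mul_nonneg (hy 0) (pow_nonneg hq n)
    have hsplit : (y 0 * q ^ n) ^ (1 + α) = y 0 * q ^ n * (y 0 ^ α * (q ^ α) ^ n) := by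
      rw [rpow_add' hyq (by linarith), rpow_one, mul_rpow (hy 0) (pow_nonneg hq n),
        ← rpow_natCast, ← rpow_mul hq, mul_comm (n : ℝ) α, rpow_mul hq, rpow_natCast,
        rpow_natCast]
    calc y (n + 1) ≤ c * b ^ (n : ℝ) * (y 0 * q ^ n) ^ (1 + α) := by
          grw [hrec n]
          gcongr
          exact hy n
      _ = c * y 0 ^ α * (y 0 * q ^ n) * (b * q ^ α) ^ n := by
          rw [hsplit, rpow_natCast, mul_pow]
          ring
      _ ≤ q * (y 0 * q ^ n) := by
          rw [mul_rpow_rpow_neg_inv hb hα.ne', one_pow, mul_one]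
          gcongr
      _ = y 0 * q ^ (n + 1) := by ring

end FastGeometricConvergence

open FastGeometricConvergence in
theorem stmt_8 (y : ℕ → ℝ) (b c α : ℝ) (hb : 1 < b) (hc : 0 < c) (hα : 0 < α)
    (hpos : ∀ n, 0 < y n)
    (hrec : ∀ n : ℕ, y (n + 1) ≤ c * b ^ (n : ℝ) * y n ^ (1 + α))
    (h0 : y 0 ≤ c ^ (-(1 / α)) * b ^ (-(1 / α ^ 2))) :
    Filter.Tendsto y Filter.atTop (nhds 0) := by
  have hb₀ : 0 < b := one_pos.trans hb
  have hy : ∀ n, 0 ≤ y n := fun n => (hpos n).le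
  have hq : b ^ (-(1 / α)) < 1 := rpow_lt_one_of_one_lt_of_neg hb (by simp [hα])
  have hbound := le_mul_rpow_neg_inv_pow hb₀ hc.le hα hy hrec
    (mul_rpow_le_rpow_neg_inv hb₀ hc hα (hy 0) h0)
  have hgeom := (tendsto_pow_atTop_nhds_zero_of_lt_one (by positivity) hq).const_mul (y 0)
  rw [mul_zero] at hgeom
  exact tendsto_of_tendsto_of_tendsto_of_le_of_le tendsto_const_nhds hgeom hy hbound
end

section
/- Let h be a continuous nonnegative real-valued function on the interval [0, T₀] for some T₀ > 0, and suppose there are positive numbers ε, δ, b such that h(τ) ≤ ε·h(τ)^{1+δ} + b for every τ ∈ [0, T₀]. Set s₀ = (ε(1+δ))^{−1/δ}. If ε ≤ δ^δ / ((b+δ)^δ (1+δ)^{1+δ}) and h(0) ≤ s₀, then h(τ) ≤ s₀ for every τ ∈ [0, T₀]. -/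
/-!
At the critical value s₀ = (ε(1+δ))^{-1/δ} one has ε s₀^{1+δ} = s₀/(1+δ), and the smallness
condition on ε says exactly that s₀ ≥ (b+δ)(1+δ)/δ; together these give ε s₀^{1+δ} + b < s₀, so
the self-bound forbids h from ever taking the value s₀. Since h starts at or below s₀ and is
continuous, the intermediate value theorem keeps it below s₀.
-/

open Set Real

theorem ContinuousOn.le_of_forall_ne {a c s : ℝ} {f : ℝ → ℝ} (hf : ContinuousOn f (Icc a c))
    (ha : f a ≤ s) (hne : ∀ x ∈ Icc a c, f x ≠ s) : ∀ x ∈ Icc a c, f x ≤ s := by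
  intro x hx
  by_contra! hlt
  obtain ⟨y, hy, hfy⟩ :=
    intermediate_value_Icc hx.1 (hf.mono (Icc_subset_Icc le_rfl hx.2)) ⟨ha, hlt.le⟩
  exact hne y ⟨hy.1, hy.2.trans hx.2⟩ hfy

noncomputable def trapThreshold (ε δ : ℝ) : ℝ := (ε * (1 + δ)) ^ (-(1 / δ))

section Threshold

variable {ε δ : ℝ} (hε : 0 < ε) (hδ : 0 < δ)
include hε hδ

theorem trapThreshold_pos : 0 < trapThreshold ε δ := by
  unfold trapThreshold; positivity

theorem mul_trapThreshold_rpow_eq_one : ε * (1 + δ) * trapThreshold ε δ ^ δ = 1 := by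
  have hA : 0 < ε * (1 + δ) := by positivity
  rw [trapThreshold, ← rpow_mul hA.le, show -(1 / δ) * δ = -1 by field_simp, rpow_neg_one,
    mul_inv_cancel₀ hA.ne']

theorem mul_trapThreshold_rpow_one_add :
    ε * trapThreshold ε δ ^ (1 + δ) = trapThreshold ε δ / (1 + δ) := by
  have h := mul_trapThreshold_rpow_eq_one hε hδ
  rw [rpow_add (trapThreshold_pos hε hδ), rpow_one, eq_div_iff (by positivity)]
  linear_combination trapThreshold ε δ * h

theorem inv_le_trapThreshold {c : ℝ} (hc : 0 < c) (h : ε * (1 + δ) ≤ c ^ δ) :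
    c⁻¹ ≤ trapThreshold ε δ := by
  calc c⁻¹ = (c ^ δ) ^ (-(1 / δ)) := by
        rw [← rpow_mul hc.le, show δ * -(1 / δ) = -1 by field_simp, rpow_neg_one]
    _ ≤ trapThreshold ε δ :=
        rpow_le_rpow_of_nonpos (by positivity) h (neg_nonpos.mpr (by positivity))

theorem self_bound_lt_trapThreshold {b : ℝ} (hb : 0 < b)
    (hsmall : ε ≤ δ ^ δ / ((b + δ) ^ δ * (1 + δ) ^ (1 + δ))) :
    ε * trapThreshold ε δ ^ (1 + δ) + b < trapThreshold ε δ := by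
  have hc : ε * (1 + δ) ≤ (δ / ((b + δ) * (1 + δ))) ^ δ := by
    rw [rpow_one_add' (by positivity) (by positivity), ← mul_assoc, mul_right_comm, ← div_div,
      le_div_iff₀ (by positivity)] at hsmall
    rwa [div_rpow hδ.le (by positivity), mul_rpow (by positivity) (by positivity)]
  have hle := inv_le_trapThreshold hε hδ (by positivity) hc
  rw [inv_div, div_le_iff₀ hδ] at hle
  rw [mul_trapThreshold_rpow_one_add hε hδ, div_add' _ _ _ (by positivity),
    div_lt_iff₀ (by positivity)]
  nlinarith

end Threshold

theorem stmt_9_general (T₀ : ℝ) (h : ℝ → ℝ)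
    (hcont : ContinuousOn h (Set.Icc 0 T₀))
    (ε δ b : ℝ) (hε : 0 < ε) (hδ : 0 < δ) (hb : 0 < b)
    (hbound : ∀ τ ∈ Set.Icc 0 T₀, h τ ≤ ε * h τ ^ (1 + δ) + b)
    (hsmall : ε ≤ δ ^ δ / ((b + δ) ^ δ * (1 + δ) ^ (1 + δ)))
    (hinit : h 0 ≤ (ε * (1 + δ)) ^ (-(1 / δ))) :
    ∀ τ ∈ Set.Icc 0 T₀, h τ ≤ (ε * (1 + δ)) ^ (-(1 / δ)) := by
  have hlt := self_bound_lt_trapThreshold hε hδ hb hsmall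
  refine hcont.le_of_forall_ne hinit fun τ hτ hτeq => ?_
  have hτbound := hbound τ hτ
  rw [hτeq] at hτbound
  exact hτbound.not_gt hlt

theorem stmt_9 (T₀ : ℝ) (hT₀ : 0 < T₀) (h : ℝ → ℝ)
    (hcont : ContinuousOn h (Set.Icc 0 T₀))
    (hnn : ∀ τ ∈ Set.Icc 0 T₀, 0 ≤ h τ)
    (ε δ b : ℝ) (hε : 0 < ε) (hδ : 0 < δ) (hb : 0 < b)
    (hbound : ∀ τ ∈ Set.Icc 0 T₀, h τ ≤ ε * h τ ^ (1 + δ) + b)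
    (hsmall : ε ≤ δ ^ δ / ((b + δ) ^ δ * (1 + δ) ^ (1 + δ)))
    (hinit : h 0 ≤ (ε * (1 + δ)) ^ (-(1 / δ))) :
    ∀ τ ∈ Set.Icc 0 T₀, h τ ≤ (ε * (1 + δ)) ^ (-(1 / δ)) :=
  stmt_9_general T₀ h hcont ε δ b hε hδ hb hbound hsmall hinit
end
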